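/- Let (K, v) be an ordered valued field, P ∈ K[X] of degree d ≥ 1, and a < b in K. Let σ₀,…,σ_d ∈ {−1,+1} satisfy σ_k · P^[k](a) ≥ 0 and σ_k · P^[k](b) ≥ 0 for k = 0,…,d−1, and σ_d · (leading coefficient of P) > 0. Set ε_k = σ₀σ_k (so ε₀ = 1); for 0 ≤ k ≤ d−1 set a_k = a if ε_k ε_{k+1} = 1 and a_k = b if ε_k ε_{k+1} = −1; set ν_k = v(P^[k](a_k)) for 0 ≤ k ≤ d−1, ν_d = v(leading coefficient of P), and δ = v(b − a). Then there exist integers k₂,…,k_d with 1 ≤ k_j ≤ j for each j, such that for every x ∈ K with a ≤ x ≤ b, writing t₁ = (x − a)/(b − a), t₂ = 1 − t₁, τ₁ = v(t₁), τ₂ = v(t₂), and setting τ' = τ₁ if ε₁ = 1 and τ' = τ₂ if ε₁ = −1, one has v(P(x)) = min( ν₀, ν₁ + δ + τ', ν₂ + 2δ + k₂τ', …, ν_d + dδ + k_dτ' ). -/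

import Mathlib

/-- An ordered valuation on a linearly ordered field `K`: an additively-written valuation
`v : K → Γ ∪ {∞}` compatible with the order. -/
def IsOrderedValuation {K Γ : Type*} [Field K] [LinearOrder K] [IsStrictOrderedRing K]
    [AddCommGroup Γ] [LinearOrder Γ] [IsOrderedAddMonoid Γ] (v : K → WithTop Γ) : Prop :=
  (∀ x, v x = ⊤ ↔ x = 0) ∧
  (∀ x y, v (x * y) = v x + v y) ∧
  (∀ x y, min (v x) (v y) ≤ v (x + y)) ∧
  (∀ x y : K, 0 ≤ x → x ≤ y → v y ≤ v x)

/-!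
Choose an endpoint `a_i ∈ {a, b}` for every `i` (`o i = true` meaning `a_i = a`). Every polynomial
`Q` of degree at most `d` has the Abel–Goncharov expansion `Q = ∑_{j ≤ d} Q^[j](a_j) G_j`, where
`G_0 = 1` and `G_j` (`Thom.basis`) is the primitive of `j G_{j-1}` vanishing at `a_0`, with
`G_{j-1}` built from the shifted endpoints `a_1, a_2, …`. Up to sign, `G_j` (`Thom.posPoly`) is a
combination of the products `|x - a_0| ^ i * |x - a_0'| ^ (j - i)`, `a_0'` the other endpoint,
whose coefficients vanish for `i < k_j` (`Thom.depth`) and are positive units of `v` for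
`i ≥ k_j`; taking primitives in this basis preserves that shape. Hence on `[a, b]` the valuation
of `G_j(x)` is `k_j v(x - a_0) + (j - k_j) v(b - a)`. The Thom sign conditions give all the terms
`Q^[j](a_j) G_j(x)` the same sign, and for an ordered valuation the valuation of a sum of
nonnegative elements is the minimum of their valuations.
-/

open Polynomial Finset

namespace IsOrderedValuation

variable {K Γ : Type*} [Field K] [LinearOrder K] [IsStrictOrderedRing K]
  [AddCommGroup Γ] [LinearOrder Γ] [IsOrderedAddMonoid Γ] {v : K → WithTop Γ}

theorem map_zero (hv : IsOrderedValuation v) : v 0 = ⊤ := (hv.1 0).2 rfl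

theorem map_mul (hv : IsOrderedValuation v) (x y : K) : v (x * y) = v x + v y := hv.2.1 x y

theorem min_le_map_add (hv : IsOrderedValuation v) (x y : K) : min (v x) (v y) ≤ v (x + y) :=
  hv.2.2.1 x y

theorem map_le_map_of_le (hv : IsOrderedValuation v) {x y : K} (hx : 0 ≤ x) (hxy : x ≤ y) :
    v y ≤ v x :=
  hv.2.2.2 x y hx hxy

variable (hv : IsOrderedValuation v)
include hv

theorem map_one : v 1 = 0 := by
  have h : v 1 = v 1 + v 1 := by rw [← hv.map_mul, one_mul]
  lift v 1 to Γ using fun h1 => one_ne_zero ((hv.1 1).1 h1) with g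
  exact_mod_cast left_eq_add.mp (WithTop.coe_injective h)

def toAddValuation : AddValuation K (WithTop Γ) :=
  AddValuation.of v hv.map_zero hv.map_one hv.min_le_map_add hv.map_mul

theorem map_neg (x : K) : v (-x) = v x := hv.toAddValuation.map_neg x

theorem map_pow (x : K) (n : ℕ) : v (x ^ n) = n • v x := hv.toAddValuation.map_pow x n

theorem map_inv (x : K) : v x⁻¹ = -v x := hv.toAddValuation.map_inv

theorem map_natCast {n : ℕ} (hn : n ≠ 0) : v n = 0 := by
  refine le_antisymm ?_ ?_
  · simpa [hv.map_one] using
      hv.map_le_map_of_le zero_le_one (Nat.one_le_cast.mpr (Nat.one_le_iff_ne_zero.mpr hn))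
  · clear hn
    induction n with
    | zero => simp [hv.map_zero]
    | succ n ih => simpa [hv.map_one, ih] using hv.min_le_map_add n 1

theorem map_intCast_of_eq_one_or_eq_neg_one {e : ℤ} (he : e = 1 ∨ e = -1) : v e = 0 := by
  rcases he with rfl | rfl <;> simp [hv.map_neg, hv.map_one]

theorem map_add_of_nonneg {x y : K} (hx : 0 ≤ x) (hy : 0 ≤ y) :
    v (x + y) = min (v x) (v y) :=
  le_antisymm (le_min (hv.map_le_map_of_le hx (by linarith)) (hv.map_le_map_of_le hy (by linarith)))
    (hv.min_le_map_add x y)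

theorem map_sum_of_nonneg {ι : Type*} {s : Finset ι} (hs : s.Nonempty) {f : ι → K}
    (hf : ∀ i ∈ s, 0 ≤ f i) : v (∑ i ∈ s, f i) = s.inf' hs (fun i => v (f i)) := by
  induction hs using Finset.Nonempty.cons_induction with
  | singleton i => simp
  | cons i s hi hs ih =>
    rw [sum_cons, inf'_cons hs, ← ih fun j hj => hf j (mem_cons_of_mem hj)]
    exact hv.map_add_of_nonneg (hf i (mem_cons_self i s))
      (sum_nonneg fun j hj => hf j (mem_cons_of_mem hj))

end IsOrderedValuation

section Bernstein

variable {K : Type*} [Field K]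

noncomputable def bernsteinSum (p q : K[X]) (N : ℕ) (c : ℕ → K) : K[X] :=
  ∑ i ∈ range (N + 1), C (c i) * p ^ i * q ^ (N - i)

/-- When `p' = -q'` is constant: the coefficients, in the basis `p ^ r * q ^ (N + 1 - r)`, of the
primitive of `bernsteinSum p q N g` that vanishes at the roots of `p`. -/
def antiderivCoeff (g : ℕ → K) (N : ℕ) : ℕ → K
  | 0 => 0
  | r + 1 => (g r + (N + 1 - r : ℕ) * antiderivCoeff g N r) / (r + 1)

theorem bernsteinSum_const_mul (p q : K[X]) (N : ℕ) (t : K) (c : ℕ → K) :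
    bernsteinSum p q N (fun i => t * c i) = C t * bernsteinSum p q N c := by
  simp only [bernsteinSum, mul_sum, C_mul, mul_assoc]

theorem bernsteinSum_reflect (p q : K[X]) (N : ℕ) (c : ℕ → K) :
    bernsteinSum p q N (fun i => c (N - i)) = bernsteinSum q p N c := by
  rw [bernsteinSum, ← sum_range_reflect]
  refine sum_congr rfl fun i hi => ?_
  rw [mem_range] at hi
  rw [show N + 1 - 1 - i = N - i by omega, Nat.sub_sub_self (by omega)]
  ring

theorem eval_bernsteinSum (p q : K[X]) (N : ℕ) (c : ℕ → K) (x : K) :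
    (bernsteinSum p q N c).eval x =
      ∑ i ∈ range (N + 1), c i * p.eval x ^ i * q.eval x ^ (N - i) := by
  simp [bernsteinSum, eval_finsetSum]

theorem eval_bernsteinSum_of_isRoot {p : K[X]} (q : K[X]) (N : ℕ) {c : ℕ → K} (hc : c 0 = 0)
    {x : K} (hx : p.IsRoot x) : (bernsteinSum p q N c).eval x = 0 := by
  rw [eval_bernsteinSum]
  refine sum_eq_zero fun i _ => ?_
  rcases i with _ | i
  · simp [hc]
  · simp [hx.eq_zero]

variable [CharZero K]

theorem succ_mul_antiderivCoeff_succ (g : ℕ → K) (N r : ℕ) :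
    (r + 1) * antiderivCoeff g N (r + 1) = g r + (N + 1 - r : ℕ) * antiderivCoeff g N r := by
  rw [antiderivCoeff, mul_div_cancel₀ _ (Nat.cast_add_one_ne_zero r)]

theorem derivative_bernsteinSum_antiderivCoeff {p q : K[X]} {α : K} (hp : derivative p = C α)
    (hq : derivative q = -C α) (g : ℕ → K) (N : ℕ) :
    derivative (bernsteinSum p q (N + 1) (antiderivCoeff g N)) = C α * bernsteinSum p q N g := by
  set f := antiderivCoeff g N
  have hterm : ∀ r, derivative (C (f r) * p ^ r * q ^ (N + 1 - r)) =
      C α * (C (r * f r) * p ^ (r - 1) * q ^ (N + 1 - r)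
        - C ((N + 1 - r : ℕ) * f r) * p ^ r * q ^ (N - r)) := by
    intro r
    simp only [derivative_mul, derivative_C, derivative_pow, hp, hq, C_mul,
      show N + 1 - r - 1 = N - r by omega]
    ring
  have hup : ∑ r ∈ range (N + 2), C (r * f r) * p ^ (r - 1) * q ^ (N + 1 - r) =
      ∑ i ∈ range (N + 1), C ((i + 1) * f (i + 1)) * p ^ i * q ^ (N - i) := by
    rw [sum_range_succ']
    simp
  have hdown : ∑ r ∈ range (N + 2), C ((N + 1 - r : ℕ) * f r) * p ^ r * q ^ (N - r) =
      ∑ i ∈ range (N + 1), C ((N + 1 - i : ℕ) * f i) * p ^ i * q ^ (N - i) := by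
    rw [sum_range_succ]
    simp
  rw [bernsteinSum, derivative_sum, sum_congr rfl fun r _ => hterm r, ← mul_sum, sum_sub_distrib,
    hup, hdown, ← sum_sub_distrib, bernsteinSum]
  congr 1
  refine sum_congr rfl fun i _ => ?_
  rw [← sub_mul, ← sub_mul, ← C_sub, succ_mul_antiderivCoeff_succ, add_sub_cancel_right]

end Bernstein

section UnitTail

variable {K Γ : Type*} [Field K] [LinearOrder K] [AddCommGroup Γ] (v : K → WithTop Γ)

def IsPosUnit (x : K) : Prop := 0 < x ∧ v x = 0

def IsUnitTail (N k : ℕ) (c : ℕ → K) : Prop :=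
  ∀ i ≤ N, (i < k → c i = 0) ∧ (k ≤ i → IsPosUnit v (c i))

variable {v}

theorem IsUnitTail.eq_zero_or_isPosUnit {N k : ℕ} {c : ℕ → K} (hc : IsUnitTail v N k c) :
    ∀ i ≤ N, c i = 0 ∨ IsPosUnit v (c i) := fun i hi =>
  (lt_or_ge i k).imp (hc i hi).1 (hc i hi).2

theorem IsUnitTail.nonneg {N k : ℕ} {c : ℕ → K} (hc : IsUnitTail v N k c) :
    ∀ i ≤ N, 0 ≤ c i :=
  fun i hi => (hc.eq_zero_or_isPosUnit i hi).elim (fun h => h.symm.le) (fun h => h.1.le)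

variable [IsStrictOrderedRing K] [LinearOrder Γ] [IsOrderedAddMonoid Γ]
  (hv : IsOrderedValuation v)
include hv

theorem isPosUnit_natCast {n : ℕ} (hn : n ≠ 0) : IsPosUnit v (n : K) :=
  ⟨by positivity, hv.map_natCast hn⟩

theorem IsPosUnit.mul {x y : K} (hx : IsPosUnit v x) (hy : IsPosUnit v y) : IsPosUnit v (x * y) :=
  ⟨mul_pos hx.1 hy.1, by rw [hv.map_mul, hx.2, hy.2, add_zero]⟩

theorem IsPosUnit.div {x y : K} (hx : IsPosUnit v x) (hy : IsPosUnit v y) : IsPosUnit v (x / y) :=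
  ⟨div_pos hx.1 hy.1, by
    rw [div_eq_mul_inv, hv.map_mul, hv.map_inv, hx.2, hy.2, neg_zero, add_zero]⟩

theorem IsPosUnit.add {x y : K} (hx : IsPosUnit v x) (hy : y = 0 ∨ IsPosUnit v y) :
    IsPosUnit v (x + y) := by
  rcases hy with rfl | hy
  · simpa using hx
  · exact ⟨add_pos hx.1 hy.1, by
      rw [hv.map_add_of_nonneg hx.1.le hy.1.le, hx.2, hy.2, min_self]⟩

theorem IsUnitTail.natCast_mul {N k n : ℕ} {c : ℕ → K} (hc : IsUnitTail v N k c)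
    (hn : n ≠ 0) : IsUnitTail v N k (fun i => n * c i) := fun i hi =>
  ⟨fun hik => by simp only [(hc i hi).1 hik, mul_zero],
    fun hik => (isPosUnit_natCast hv hn).mul hv ((hc i hi).2 hik)⟩

theorem isUnitTail_antiderivCoeff {g : ℕ → K} {N lo : ℕ}
    (hg : ∀ i ≤ N, g i = 0 ∨ IsPosUnit v (g i))
    (hlo : ∀ i < lo, g i = 0) (hglo : IsPosUnit v (g lo)) :
    IsUnitTail v (N + 1) (lo + 1) (antiderivCoeff g N) := by
  suffices ∀ r ≤ N + 1, (r ≤ lo → antiderivCoeff g N r = 0) ∧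
      (lo < r → IsPosUnit v (antiderivCoeff g N r)) from
    fun r hr => ⟨fun h => (this r hr).1 (by omega), fun h => (this r hr).2 (by omega)⟩
  intro r
  induction r with
  | zero => exact fun _ => ⟨fun _ => rfl, fun h => absurd h (Nat.not_lt_zero _)⟩
  | succ r ih =>
    intro hr
    obtain ⟨ih_zero, ih_pos⟩ := ih (by omega)
    rw [antiderivCoeff]
    refine ⟨fun h => by rw [hlo r (by omega), ih_zero (by omega)]; simp, fun h => ?_⟩
    have hden : IsPosUnit v ((r : K) + 1) := by exact_mod_cast isPosUnit_natCast hv r.succ_ne_zero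
    refine IsPosUnit.div hv ?_ hden
    rcases (Nat.lt_succ_iff.mp h).eq_or_lt with rfl | hlt
    · simpa [ih_zero le_rfl] using hglo
    · rw [add_comm]
      exact ((isPosUnit_natCast hv (by omega)).mul hv (ih_pos hlt)).add hv (hg r (by omega))

theorem IsUnitTail.map_sum_mul_pow_mul_pow {N k : ℕ} {c : ℕ → K} (hc : IsUnitTail v N k c)
    (hk : k ≤ N) {s u : K} (hs : 0 ≤ s) (hu : 0 ≤ u) :
    v (∑ i ∈ range (N + 1), c i * s ^ i * u ^ (N - i)) = k • v s + (N - k) • v (s + u) := by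
  have hnonneg : ∀ i ∈ range (N + 1), 0 ≤ c i * s ^ i * u ^ (N - i) := fun i hi => by
    have := hc.nonneg i (Nat.lt_succ_iff.mp (mem_range.mp hi))
    positivity
  have hval : ∀ i, k ≤ i → i ≤ N →
      v (c i * s ^ i * u ^ (N - i)) = i • v s + (N - i) • v u := fun i hki hiN => by
    rw [hv.map_mul, hv.map_mul, ((hc i hiN).2 hki).2, hv.map_pow, hv.map_pow, zero_add]
  rw [hv.map_sum_of_nonneg nonempty_range_add_one hnonneg, hv.map_add_of_nonneg hs hu]
  -- the minimum of `i • v s + (N - i) • v u` over `k ≤ i ≤ N` is attained at `i = k` or `i = N`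
  refine le_antisymm ?_ (le_inf' _ _ fun i hi => ?_)
  · rcases le_total (v s) (v u) with h | h
    · refine (inf'_le _ (mem_range.mpr N.lt_succ_self)).trans_eq ?_
      rw [hval N hk le_rfl, min_eq_left h, ← add_nsmul, Nat.add_sub_cancel' hk, Nat.sub_self,
        zero_nsmul, add_zero]
    · refine (inf'_le _ (mem_range.mpr (Nat.lt_succ_of_le hk))).trans_eq ?_
      rw [hval k le_rfl hk, min_eq_right h]
  · have hiN : i ≤ N := Nat.lt_succ_iff.mp (mem_range.mp hi)
    rcases lt_or_ge i k with hik | hik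
    · simp [(hc i hiN).1 hik, hv.map_zero]
    calc k • v s + (N - k) • min (v s) (v u)
        = k • v s + (i - k) • min (v s) (v u) + (N - i) • min (v s) (v u) := by
          rw [add_assoc, ← add_nsmul, show i - k + (N - i) = N - k by omega]
      _ ≤ k • v s + (i - k) • v s + (N - i) • v u := by
          gcongr
          · exact min_le_left _ _
          · exact min_le_right _ _
      _ = v (c i * s ^ i * u ^ (N - i)) := by
          rw [hval i hik hiN, ← add_nsmul, Nat.add_sub_cancel' hik]

end UnitTail

theorem Polynomial.hasseDeriv_derivative {R : Type*} [Semiring R] (k : ℕ) (p : R[X]) :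
    hasseDeriv k (derivative p) = (k + 1) • hasseDeriv (k + 1) p := by
  rw [← hasseDeriv_one', ← LinearMap.comp_apply, hasseDeriv_comp, Nat.choose_succ_self_right,
    LinearMap.smul_apply]

namespace Thom

variable {K : Type*} [Field K] (o : ℕ → Bool)

def depth : ℕ → ℕ → ℕ
  | _, 0 => 0
  | m, j + 1 => if o m = o (m + 1) then depth (m + 1) j + 1 else 1

theorem depth_le (m j : ℕ) : depth o m j ≤ j := by
  induction j generalizing m with
  | zero => rfl
  | succ j ih => rw [depth]; split_ifs <;> grind

theorem one_le_depth (m : ℕ) {j : ℕ} (hj : j ≠ 0) : 1 ≤ depth o m j := by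
  obtain ⟨j, rfl⟩ := Nat.exists_eq_succ_of_ne_zero hj
  rw [depth]; split_ifs <;> omega

theorem depth_one (m : ℕ) : depth o m 1 = 1 := by
  simp [depth]

variable (K) in
/-- The coefficients of `posPoly o a b m j` in the basis attached to the endpoint `o m`. Reversing
the coefficients expresses `posPoly o a b (m + 1) j` in the basis of the other endpoint. -/
noncomputable def coeff : ℕ → ℕ → ℕ → K
  | _, 0 => fun i => if i = 0 then 1 else 0
  | m, j + 1 => fun i => (j + 1 : ℕ) * antiderivCoeff
      (if o m = o (m + 1) then coeff (m + 1) j else fun l => coeff (m + 1) j (j - l)) j i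

def boolSign (e : Bool) : K := if e then 1 else -1

theorem boolSign_mul_self (e : Bool) : boolSign e * boolSign e = (1 : K) := by
  cases e <;> simp [boolSign]

noncomputable def distPoly (a b : K) (e : Bool) : K[X] := if e then X - C a else C b - X

theorem derivative_distPoly (a b : K) (e : Bool) :
    derivative (distPoly a b e) = C (boolSign e) := by
  cases e <;> simp [distPoly, boolSign]

theorem isRoot_distPoly (a b : K) (e : Bool) : (distPoly a b e).IsRoot (if e then a else b) := by
  cases e <;> simp [distPoly]

noncomputable def posPoly (a b : K) (m j : ℕ) : K[X] :=
  bernsteinSum (distPoly a b (o m)) (distPoly a b !(o m)) j (coeff K o m j)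

noncomputable def sign (m j : ℕ) : K := ∏ i ∈ range j, boolSign (o (m + i))

noncomputable def basis (a b : K) (m j : ℕ) : K[X] := C (sign o m j) * posPoly o a b m j

theorem sign_succ (m j : ℕ) : sign o m (j + 1) = boolSign (o m) * (sign o (m + 1) j : K) := by
  simp only [sign, prod_range_succ', add_zero, mul_comm (boolSign (o m)), add_assoc, add_comm 1]

theorem sign_succ_right (m j : ℕ) : sign o m (j + 1) = (sign o m j : K) * boolSign (o (m + j)) :=
  prod_range_succ _ _

theorem posPoly_zero (a b : K) (m : ℕ) : posPoly o a b m 0 = 1 := by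
  simp [posPoly, bernsteinSum, coeff]

theorem basis_zero (a b : K) (m : ℕ) : basis o a b m 0 = 1 := by
  simp [basis, sign, posPoly_zero]

theorem eval_posPoly_succ_start (a b : K) (m j : ℕ) :
    (posPoly o a b m (j + 1)).eval (if o m then a else b) = 0 :=
  eval_bernsteinSum_of_isRoot _ _ (by simp [coeff, antiderivCoeff]) (isRoot_distPoly a b (o m))

theorem eval_basis_succ_start (a b : K) (m j : ℕ) :
    (basis o a b m (j + 1)).eval (if o m then a else b) = 0 := by
  rw [basis, eval_mul, eval_posPoly_succ_start, mul_zero]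

theorem sign_eq_of_signs {σ : ℕ → ℤ} {d : ℕ}
    (hσ : ∀ k ≤ d, σ k = 1 ∨ σ k = -1) {j : ℕ} (hj : j ≤ d) :
    sign (fun i => decide ((σ 0 * σ i) * (σ 0 * σ (i + 1)) = 1)) 0 j =
      ((σ 0 * σ j : ℤ) : K) := by
  induction j with
  | zero => rcases hσ 0 hj with h | h <;> simp [sign, h]
  | succ j ih =>
    rw [sign_succ_right, ih (by omega), zero_add]
    rcases hσ 0 (by omega) with h0 | h0 <;> rcases hσ j (by omega) with h1 | h1 <;>
      rcases hσ (j + 1) hj with h2 | h2 <;> simp [boolSign, h0, h1, h2]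

theorem sign_mul_eval_hasseDeriv_smul_nonneg [LinearOrder K] {P : K[X]} {d : ℕ}
    (hdeg : P.natDegree = d) {a b : K}
    {σ : ℕ → ℤ} (hσ : ∀ k ≤ d, σ k = 1 ∨ σ k = -1)
    (hga : ∀ k < d, 0 ≤ (σ k : K) * (hasseDeriv k P).eval a)
    (hgb : ∀ k < d, 0 ≤ (σ k : K) * (hasseDeriv k P).eval b)
    (hlead : 0 < (σ d : K) * P.leadingCoeff) {j : ℕ} (hj : j ≤ d) :
    0 ≤ sign (fun i => decide ((σ 0 * σ i) * (σ 0 * σ (i + 1)) = 1)) 0 j *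
      (hasseDeriv j ((σ 0 : K) • P)).eval
        (if (σ 0 * σ j) * (σ 0 * σ (j + 1)) = 1 then a else b) := by
  have hσ0 : σ 0 * σ 0 = 1 := by rcases hσ 0 d.zero_le with h | h <;> simp [h]
  rw [sign_eq_of_signs hσ hj, map_smul, eval_smul, smul_eq_mul, ← mul_assoc, ← Int.cast_mul,
    mul_right_comm, hσ0, one_mul]
  rcases hj.lt_or_eq with hj | rfl
  · split_ifs
    exacts [hga j hj, hgb j hj]
  · simpa [hdeg ▸ hasseDeriv_natDegree_eq_C P] using hlead.le

variable [CharZero K]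

theorem derivative_posPoly_succ (a b : K) (m j : ℕ) :
    derivative (posPoly o a b m (j + 1)) =
      C (((j + 1 : ℕ) : K) * boolSign (o m)) * posPoly o a b (m + 1) j := by
  have hq : derivative (distPoly a b !(o m)) = -C (boolSign (o m)) := by
    rw [derivative_distPoly]; cases o m <;> simp [boolSign]
  rw [posPoly, coeff, bernsteinSum_const_mul, derivative_C_mul,
    derivative_bernsteinSum_antiderivCoeff (derivative_distPoly a b (o m)) hq, C_mul, mul_assoc,
    posPoly]
  congr 2
  split_ifs with h
  · rw [h]
  · rw [bernsteinSum_reflect, show o (m + 1) = !(o m) by cases h' : o m <;> simp_all]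
    simp

theorem derivative_basis_succ (a b : K) (m j : ℕ) :
    derivative (basis o a b m (j + 1)) = C ((j + 1 : ℕ) : K) * basis o a b (m + 1) j := by
  rw [basis, derivative_C_mul, derivative_posPoly_succ, basis, sign_succ]
  simp only [← mul_assoc, ← C_mul]
  congr 2
  linear_combination (((j + 1 : ℕ) : K) * sign o (m + 1) j) * boolSign_mul_self (K := K) (o m)

theorem eq_sum_basis (a b : K) (d : ℕ) : ∀ (m : ℕ) (Q : K[X]), Q.natDegree ≤ d →
    Q = ∑ j ∈ range (d + 1), C ((hasseDeriv j Q).eval (if o (m + j) then a else b)) *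
      basis o a b m j := by
  induction d with
  | zero =>
    intro m Q hQ
    obtain ⟨c, rfl⟩ : ∃ c, Q = C c := ⟨_, eq_C_of_natDegree_le_zero hQ⟩
    simp [basis_zero]
  | succ d ih =>
    intro m Q hQ
    set R := ∑ j ∈ range (d + 2), C ((hasseDeriv j Q).eval (if o (m + j) then a else b)) *
      basis o a b m j
    have hderiv : derivative R = derivative Q := by
      rw [ih (m + 1) (derivative Q) ((natDegree_derivative_le Q).trans (by omega)), derivative_sum,
        sum_range_succ']
      simp only [derivative_C_mul, derivative_basis_succ, basis_zero, derivative_one, mul_zero,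
        add_zero, hasseDeriv_derivative, nsmul_eq_mul, ← mul_assoc, ← C_mul,
        add_assoc, add_comm 1]
      refine sum_congr rfl fun j _ => ?_
      rw [eval_mul, eval_natCast, mul_comm ((j + 1 : ℕ) : K)]
    have hstart : R.eval (if o m then a else b) = Q.eval (if o m then a else b) := by
      simp [R, eval_finsetSum, sum_range_succ', eval_basis_succ_start, basis_zero]
    obtain ⟨c, hc⟩ : ∃ c, Q - R = C c :=
      ⟨_, eq_C_of_derivative_eq_zero (by rw [derivative_sub, hderiv, sub_self])⟩
    have hc0 : c = 0 := by simpa [hstart] using (congrArg (eval (if o m then a else b)) hc).symm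
    rwa [hc0, C_0, sub_eq_zero] at hc

end Thom

namespace Thom

variable {K Γ : Type*} [Field K] [LinearOrder K] [IsStrictOrderedRing K]
  [AddCommGroup Γ] [LinearOrder Γ] [IsOrderedAddMonoid Γ] {v : K → WithTop Γ}
  (hv : IsOrderedValuation v) (o : ℕ → Bool)
include hv

theorem isUnitTail_coeff (m j : ℕ) : IsUnitTail v j (depth o m j) (coeff K o m j) := by
  induction j generalizing m with
  | zero =>
    intro i hi
    obtain rfl : i = 0 := Nat.le_zero.mp hi
    exact ⟨fun h => absurd h (Nat.lt_irrefl 0),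
      fun _ => by simpa [coeff] using ⟨one_pos, hv.map_one⟩⟩
  | succ j ih =>
    have hk := depth_le o (m + 1) j
    have hc := ih (m + 1)
    simp only [depth, coeff]
    split_ifs
    · exact (isUnitTail_antiderivCoeff hv hc.eq_zero_or_isPosUnit
        (fun i hi => (hc i (by omega)).1 hi) ((hc _ hk).2 le_rfl)).natCast_mul hv j.succ_ne_zero
    · refine (isUnitTail_antiderivCoeff hv (lo := 0)
        (fun i hi => hc.eq_zero_or_isPosUnit (j - i) (Nat.sub_le j i))
        (fun i hi => absurd hi (Nat.not_lt_zero i)) ?_).natCast_mul hv j.succ_ne_zero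
      simpa using (hc j le_rfl).2 hk

omit hv in
theorem eval_distPoly_nonneg {a b x : K} (hax : a ≤ x) (hxb : x ≤ b) (e : Bool) :
    0 ≤ (distPoly a b e).eval x := by
  cases e <;> simp [distPoly] <;> assumption

theorem map_sign (m j : ℕ) : v (sign o m j) = 0 := by
  induction j generalizing m with
  | zero => simp [sign, hv.map_one]
  | succ j ih =>
    rw [sign_succ, hv.map_mul, ih, add_zero]
    cases o m <;> simp [boolSign, hv.map_neg, hv.map_one]

theorem map_eval_distPoly {a b x : K} (hab : a < b) (e : Bool) :
    v ((distPoly a b e).eval x) =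
      v (if e then (x - a) / (b - a) else 1 - (x - a) / (b - a)) + v (b - a) := by
  rw [← hv.map_mul]
  congr 1
  have hba : b - a ≠ 0 := sub_ne_zero.mpr hab.ne'
  cases e
  · simp [distPoly]
    field_simp
    ring
  · simp [distPoly, hba]

theorem map_eval_posPoly {a b x : K} (hab : a < b) (hax : a ≤ x) (hxb : x ≤ b) (m j : ℕ) :
    v ((posPoly o a b m j).eval x) = j • v (b - a) +
      depth o m j • v (if o m then (x - a) / (b - a) else 1 - (x - a) / (b - a)) := by
  have hk := depth_le o m j
  have hsum : (distPoly a b (o m)).eval x + (distPoly a b !(o m)).eval x = b - a := by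
    cases o m <;> simp [distPoly]
  rw [posPoly, eval_bernsteinSum, (isUnitTail_coeff hv o m j).map_sum_mul_pow_mul_pow hv hk
    (eval_distPoly_nonneg hax hxb _) (eval_distPoly_nonneg hax hxb _), hsum,
    map_eval_distPoly hv hab, nsmul_add]
  generalize depth o m j = k at hk ⊢
  obtain ⟨l, rfl⟩ := Nat.exists_eq_add_of_le hk
  rw [Nat.add_sub_cancel_left, add_nsmul]
  abel

theorem eval_posPoly_nonneg {a b x : K} (hax : a ≤ x) (hxb : x ≤ b) (m j : ℕ) :
    0 ≤ (posPoly o a b m j).eval x := by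
  rw [posPoly, eval_bernsteinSum]
  refine sum_nonneg fun i hi => ?_
  have := (isUnitTail_coeff hv o m j).nonneg i (Nat.lt_succ_iff.mp (mem_range.mp hi))
  have := eval_distPoly_nonneg hax hxb (o m)
  have := eval_distPoly_nonneg hax hxb !(o m)
  positivity

theorem map_eval_eq_inf' {a b : K} (hab : a < b) {Q : K[X]} {d : ℕ} (hQ : Q.natDegree ≤ d)
    (hsign : ∀ j ≤ d, 0 ≤ sign o 0 j * (hasseDeriv j Q).eval (if o j then a else b))
    {x : K} (hax : a ≤ x) (hxb : x ≤ b) :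
    v (Q.eval x) = (range (d + 1)).inf' nonempty_range_add_one (fun j =>
      v ((hasseDeriv j Q).eval (if o j then a else b)) + j • v (b - a) +
        depth o 0 j • v (if o 0 then (x - a) / (b - a) else 1 - (x - a) / (b - a))) := by
  have hexpand : Q.eval x = ∑ j ∈ range (d + 1),
      sign o 0 j * (hasseDeriv j Q).eval (if o j then a else b) * (posPoly o a b 0 j).eval x := by
    conv_lhs => rw [eq_sum_basis o a b d 0 Q hQ]
    simp only [eval_finsetSum, basis, eval_mul, eval_C, zero_add]
    exact sum_congr rfl fun j _ => by ring
  rw [hexpand, hv.map_sum_of_nonneg nonempty_range_add_one fun j hj =>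
    mul_nonneg (hsign j (Nat.lt_succ_iff.mp (mem_range.mp hj)))
      (eval_posPoly_nonneg hv o hax hxb 0 j)]
  refine inf'_congr _ rfl fun j _ => ?_
  rw [hv.map_mul, hv.map_mul, map_sign hv, zero_add, map_eval_posPoly hv o hab hax hxb, add_assoc]

end Thom

theorem valuation_thom_interval_general {K Γ : Type*} [Field K] [LinearOrder K] [IsStrictOrderedRing K]
    [AddCommGroup Γ] [LinearOrder Γ] [IsOrderedAddMonoid Γ] (v : K → WithTop Γ) (hv : IsOrderedValuation v)
    (P : Polynomial K) (d : ℕ) (hdeg : P.natDegree = d)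
    (a b : K) (hab : a < b)
    (σ : ℕ → ℤ) (hσ : ∀ k, k ≤ d → σ k = 1 ∨ σ k = -1)
    (hga : ∀ k, k < d → 0 ≤ (σ k : K) * (Polynomial.hasseDeriv k P).eval a)
    (hgb : ∀ k, k < d → 0 ≤ (σ k : K) * (Polynomial.hasseDeriv k P).eval b)
    (hlead : 0 < (σ d : K) * P.leadingCoeff) :
    ∃ kk : ℕ → ℕ, kk 0 = 0 ∧ kk 1 = 1 ∧
      (∀ j, 2 ≤ j → j ≤ d → 1 ≤ kk j ∧ kk j ≤ j) ∧
      ∀ x : K, a ≤ x → x ≤ b →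
        v (P.eval x) =
          (Finset.range (d + 1)).inf' Finset.nonempty_range_add_one
            (fun j =>
              (if j = d then v P.leadingCoeff
               else v ((Polynomial.hasseDeriv j P).eval
                  (if (σ 0 * σ j) * (σ 0 * σ (j + 1)) = 1 then a else b)))
              + j • v (b - a)
              + kk j • (if σ 0 * σ 1 = 1 then v ((x - a) / (b - a))
                        else v (1 - (x - a) / (b - a)))) := by
  set o : ℕ → Bool := fun j => decide ((σ 0 * σ j) * (σ 0 * σ (j + 1)) = 1) with ho
  refine ⟨Thom.depth o 0, rfl, Thom.depth_one o 0,
    fun j hj _ => ⟨Thom.one_le_depth o 0 (by omega), Thom.depth_le o 0 j⟩,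
    fun x hax hxb => ?_⟩
  have hvσ0 : v (σ 0 : K) = 0 := hv.map_intCast_of_eq_one_or_eq_neg_one (hσ 0 d.zero_le)
  have key := Thom.map_eval_eq_inf' hv o hab ((natDegree_smul_le _ _).trans hdeg.le)
    (fun j hj => by simpa only [ho, decide_eq_true_eq] using
      Thom.sign_mul_eval_hasseDeriv_smul_nonneg hdeg hσ hga hgb hlead hj) hax hxb
  simp only [map_smul, eval_smul, smul_eq_mul, hv.map_mul, hvσ0, zero_add] at key
  rw [key]
  refine inf'_congr _ rfl fun j _ => ?_
  have hσ0 : σ 0 * σ 0 = 1 := by rcases hσ 0 d.zero_le with h | h <;> simp [h]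
  simp only [ho, hσ0, one_mul, zero_add, decide_eq_true_eq, apply_ite v]
  by_cases hjd : j = d
  · subst hjd
    simp [hdeg ▸ hasseDeriv_natDegree_eq_C P]
  · rw [if_neg hjd]

/-- **Valuation of `P(x)` on a Thom interval** (Theorem `thValThom` (a)).
With `ε_k = σ₀σ_k`, `a_k = a` if `ε_k ε_{k+1} = 1` and `a_k = b` otherwise,
`ν_k = v(P^[k](a_k))` (`ν_d = v(leading coefficient)`), `δ = v(b−a)`, there are integers
`k₂,…,k_d` with `1 ≤ k_j ≤ j` (and `k₀ = 0`, `k₁ = 1`) such that for all `x ∈ [a,b]`, with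
`t₁ = (x−a)/(b−a)`, `t₂ = 1 − t₁`, `τ' = v(t₁)` if `ε₁ = 1` and `τ' = v(t₂)` if `ε₁ = −1`,
`v(P(x)) = min_{0 ≤ j ≤ d} ( ν_j + j·δ + k_j·τ' )`. -/
theorem valuation_thom_interval {K Γ : Type*} [Field K] [LinearOrder K] [IsStrictOrderedRing K]
    [AddCommGroup Γ] [LinearOrder Γ] [IsOrderedAddMonoid Γ] (v : K → WithTop Γ) (hv : IsOrderedValuation v)
    (P : Polynomial K) (d : ℕ) (hd : 1 ≤ d) (hdeg : P.natDegree = d)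
    (a b : K) (hab : a < b)
    (σ : ℕ → ℤ) (hσ : ∀ k, k ≤ d → σ k = 1 ∨ σ k = -1)
    (hga : ∀ k, k < d → 0 ≤ (σ k : K) * (Polynomial.hasseDeriv k P).eval a)
    (hgb : ∀ k, k < d → 0 ≤ (σ k : K) * (Polynomial.hasseDeriv k P).eval b)
    (hlead : 0 < (σ d : K) * P.leadingCoeff) :
    ∃ kk : ℕ → ℕ, kk 0 = 0 ∧ kk 1 = 1 ∧
      (∀ j, 2 ≤ j → j ≤ d → 1 ≤ kk j ∧ kk j ≤ j) ∧
      ∀ x : K, a ≤ x → x ≤ b →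
        v (P.eval x) =
          (Finset.range (d + 1)).inf' Finset.nonempty_range_add_one
            (fun j =>
              (if j = d then v P.leadingCoeff
               else v ((Polynomial.hasseDeriv j P).eval
                  (if (σ 0 * σ j) * (σ 0 * σ (j + 1)) = 1 then a else b)))
              + j • v (b - a)
              + kk j • (if σ 0 * σ 1 = 1 then v ((x - a) / (b - a))
                        else v (1 - (x - a) / (b - a)))) :=
  valuation_thom_interval_general v hv P d hdeg a b hab σ hσ hga hgb hlead
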